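/- arXiv:1804.05794 — 3 statements merged into one kernel-verified Lean document; each statement's English description precedes it below -/
import Mathlib

section
/- In Kirchhoff's construction, for x ∈ S^{n+1} ⊂ ℝ^{n+2} written as x = αe + βy with α² + β² = 1, β ≥ 0, y ∈ S^n, the map σ_x = α·Id + β·J̃_y sends e to x, and sends every vector in ℝ^{n+1} (i.e., orthogonal to e) to a vector orthogonal to x. -/
open scoped RealInnerProductSpace

section

variable {E : Type*} [NormedAddCommGroup E] [InnerProductSpace ℝ E]

theorem inner_smul_add_smul_apply_of_inner_map_map {J : E →ₗ[ℝ] E}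
    (hJ : ∀ u v, ⟪J u, J v⟫ = ⟪u, v⟫) (α β : ℝ) (u w : E) :
    ⟪α • u + β • J u, α • w + β • J w⟫
      = (α ^ 2 + β ^ 2) * ⟪u, w⟫ + α * β * (⟪u, J w⟫ + ⟪J u, w⟫) := by
  simp only [inner_add_left, inner_add_right, real_inner_smul_left, real_inner_smul_right, hJ]
  ring

theorem inner_map_eq_neg_inner_of_map_eq_neg {J : E →ₗ[ℝ] E}
    (hJ : ∀ u v, ⟪J u, J v⟫ = ⟪u, v⟫) {e y : E} (hJy : J y = -e) (v : E) :
    ⟪J v, e⟫ = -⟪v, y⟫ := by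
  rw [← hJ v y, hJy, inner_neg_right, neg_neg]

end

theorem kirchhoff_stmt11_general {n : ℕ}
    (e y : EuclideanSpace ℝ (Fin (n + 2)))
    (J : EuclideanSpace ℝ (Fin (n + 2)) →ₗ[ℝ] EuclideanSpace ℝ (Fin (n + 2)))
    (hJe : J e = y) (hJy : J y = -e)
    (horth : ∀ u v, ⟪J u, J v⟫ = ⟪u, v⟫)
    (α β : ℝ) :
    α • e + β • J e = α • e + β • y
      ∧ (∀ v, ⟪v, e⟫ = 0 → ⟪α • v + β • J v, α • e + β • y⟫ = 0) := by
  refine ⟨by rw [hJe], fun v hv => ?_⟩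
  rw [← hJe, inner_smul_add_smul_apply_of_inner_map_map horth, hv,
    inner_map_eq_neg_inner_of_map_eq_neg horth hJy, hJe]
  ring

/-- Kirchhoff's construction: for `x = α·e + β·y ∈ S^{n+1}` with
`α² + β² = 1`, `β ≥ 0`, `y ∈ Sⁿ` orthogonal to `e`, the map `σ_x = α·Id + β·J̃_y` sends
`e` to `x`, and sends every vector orthogonal to `e` (i.e. in `ℝ^{n+1}`) to a vector
orthogonal to `x`. -/
theorem kirchhoff_stmt11 {n : ℕ}
    (e y : EuclideanSpace ℝ (Fin (n + 2)))
    (he : ‖e‖ = 1) (hy : ‖y‖ = 1) (hey : ⟪e, y⟫ = 0)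
    (J : EuclideanSpace ℝ (Fin (n + 2)) →ₗ[ℝ] EuclideanSpace ℝ (Fin (n + 2)))
    (hJe : J e = y) (hJy : J y = -e)
    (horth : ∀ u v, ⟪J u, J v⟫ = ⟪u, v⟫)
    (hJ2 : ∀ v, J (J v) = -v)
    (α β : ℝ) (hαβ : α ^ 2 + β ^ 2 = 1) (hβ : 0 ≤ β) :
    α • e + β • J e = α • e + β • y
      ∧ (∀ v, ⟪v, e⟫ = 0 → ⟪α • v + β • J v, α • e + β • y⟫ = 0) :=
  kirchhoff_stmt11_general e y J hJe hJy horth α β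
end

section
/- The Kirchhoff vector fields on S^{n+1} can be written explicitly as X_i(x) = x_{n+2} e_i - x_i e_{n+2} + β(x) J_y(e_i - ⟨y, e_i⟩ y), where x = x_{n+2} e_{n+2} + β(x) y with y ∈ S^n; each X_i(x) is tangent to S^{n+1} at x (i.e., ⟨X_i(x), x⟩ = 0). -/
/-!
Skew-adjointness of `J` together with `J e = y`, `J y = -e` gives `⟪J v, e⟫ = -⟪v, y⟫` and,
for `v ⊥ e`, `⟪J v, y⟫ = 0`; hence the two cross terms of `⟪α v + β J v, α e + β y⟫` cancel.
The explicit form only uses `J (⟪y, v⟫ y) = -⟪y, v⟫ e` and `⟪α e + β y, v⟫ = β ⟪y, v⟫`.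
-/

open scoped RealInnerProductSpace

section SkewMap

variable {E : Type*} [NormedAddCommGroup E] [InnerProductSpace ℝ E] {J : E →ₗ[ℝ] E} {e y v : E}

theorem inner_map_left_eq_neg_inner (hskew : ∀ u w, ⟪J u, w⟫ = -⟪u, J w⟫) (hJe : J e = y)
    (v : E) : ⟪J v, e⟫ = -⟪v, y⟫ := by
  rw [hskew, hJe]

theorem inner_map_left_eq_zero_of_inner_eq_zero (hskew : ∀ u w, ⟪J u, w⟫ = -⟪u, J w⟫)
    (hJy : J y = -e) (hv : ⟪v, e⟫ = 0) : ⟪J v, y⟫ = 0 := by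
  rw [hskew, hJy, inner_neg_right, hv, neg_zero, neg_zero]

theorem smul_add_smul_map_eq_of_inner_eq_zero (hJy : J y = -e) (hv : ⟪v, e⟫ = 0) (α β : ℝ) :
    α • v + β • J v = α • v - ⟪α • e + β • y, v⟫ • e + β • J (v - ⟪y, v⟫ • y) := by
  have hxv : ⟪α • e + β • y, v⟫ = β * ⟪y, v⟫ := by
    rw [inner_add_left, real_inner_smul_left, real_inner_smul_left, real_inner_comm, hv,
      mul_zero, zero_add]
  rw [hxv, map_sub, map_smul, hJy]
  module

theorem inner_smul_add_smul_map_eq_zero (hskew : ∀ u w, ⟪J u, w⟫ = -⟪u, J w⟫)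
    (hJe : J e = y) (hJy : J y = -e) (hv : ⟪v, e⟫ = 0) (α β : ℝ) :
    ⟪α • v + β • J v, α • e + β • y⟫ = 0 := by
  simp only [inner_add_left, inner_add_right, real_inner_smul_left, real_inner_smul_right,
    inner_map_left_eq_neg_inner hskew hJe, inner_map_left_eq_zero_of_inner_eq_zero hskew hJy hv,
    hv]
  ring

end SkewMap

theorem kirchhoff_stmt13_general {n : ℕ}
    (e y : EuclideanSpace ℝ (Fin (n + 2)))
    (J : EuclideanSpace ℝ (Fin (n + 2)) →ₗ[ℝ] EuclideanSpace ℝ (Fin (n + 2)))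
    (hJe : J e = y) (hJy : J y = -e)
    (hskew : ∀ u v, ⟪J u, v⟫ = -⟪u, J v⟫)
    (α β : ℝ) :
    ∀ v, ⟪v, e⟫ = 0 →
      (α • v + β • J v
          = α • v - ⟪α • e + β • y, v⟫ • e + β • J (v - ⟪y, v⟫ • y))
        ∧ ⟪α • v + β • J v, α • e + β • y⟫ = 0 :=
  fun _ hv => ⟨smul_add_smul_map_eq_of_inner_eq_zero hJy hv α β,
    inner_smul_add_smul_map_eq_zero hskew hJe hJy hv α β⟩

/-- the Kirchhoff vector fields on `S^{n+1}` admit the explicit form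
`X_i(x) = x_{n+2}·e_i - x_i·e_{n+2} + β·J_y(e_i - ⟨y,e_i⟩y)` and are tangent to `S^{n+1}`
at `x`. Abstractly: for `x = α·e + β·y` (`α² + β² = 1`, `β ≥ 0`, `e ⊥ y` unit vectors) and
any `v ⊥ e`, the vector `σ_x(v) = α·v + β·J̃(v)` equals
`α·v - ⟨x,v⟩·e + β·J̃(v - ⟨y,v⟩·y)` and satisfies `⟨σ_x(v), x⟩ = 0`. -/
theorem kirchhoff_stmt13 {n : ℕ}
    (e y : EuclideanSpace ℝ (Fin (n + 2)))
    (he : ‖e‖ = 1) (hy : ‖y‖ = 1) (hey : ⟪e, y⟫ = 0)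
    (J : EuclideanSpace ℝ (Fin (n + 2)) →ₗ[ℝ] EuclideanSpace ℝ (Fin (n + 2)))
    (hJe : J e = y) (hJy : J y = -e)
    (hskew : ∀ u v, ⟪J u, v⟫ = -⟪u, J v⟫)
    (α β : ℝ) (hαβ : α ^ 2 + β ^ 2 = 1) (hβ : 0 ≤ β) :
    ∀ v, ⟪v, e⟫ = 0 →
      (α • v + β • J v
          = α • v - ⟪α • e + β • y, v⟫ • e + β • J (v - ⟪y, v⟫ • y))
        ∧ ⟪α • v + β • J v, α • e + β • y⟫ = 0 :=
  kirchhoff_stmt13_general e y J hJe hJy hskew α β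
end

section
/- Define m̂ : ℝ^8 × ℝ^8 → ℝ^8 by m̂(x, y) = σ̃_x(y), where σ̃_x is the Kirchhoff map built from an almost hermitian structure on S^6. Then m̂ satisfies the norm product rule ‖m̂(x,y)‖² = ‖x‖² ‖y‖², has two-sided identity e, and m̂(x, ·) is a linear isomorphism for each x ≠ 0. -/
/-!
Write `x = ⟪x, e⟫ • e + b` with `b ⊥ e`. Then `σ̃_x = ⟪x, e⟫ • id + ‖b‖ • A` with
`A = J̃_{b/‖b‖}`, also when `b = 0` since the second term then vanishes, so `σ̃_x` is linear.
As `A` is an isometry with `A² = -id`, it is skew, so `u ⊥ A u` and Pythagoras gives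
`‖σ̃_x z‖² = (⟪x, e⟫² + ‖b‖²) ‖z‖² = ‖x‖² ‖z‖²`. Hence `σ̃_x` is injective for `x ≠ 0`, and
bijective in finite dimension. Finally `σ̃_e = id`, and `σ̃_z e = ⟪z, e⟫ • e + ‖b‖ • (b / ‖b‖) = z`
because `J̃_y e = y`.
-/

open scoped RealInnerProductSpace Classical

/-- The Kirchhoff map `σ̃_x(z)`: writing `x = α·e + b` with `α = ⟨x,e⟩` and `b ⊥ e`,
`σ̃_x = α·Id + ‖b‖·J̃_{b/‖b‖}` (and `σ̃_x = α·Id` when `b = 0`), where `J : y ↦ J̃_y`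
assigns to each unit vector `y ⊥ e` the extended complex structure of Kirchhoff's
construction. -/
noncomputable def kirchhoffMul {V : Type*} [NormedAddCommGroup V] [InnerProductSpace ℝ V]
    (J : V → V →ₗ[ℝ] V) (e x z : V) : V :=
  if h : x - ⟪x, e⟫ • e = (0 : V) then ⟪x, e⟫ • z
  else ⟪x, e⟫ • z + ‖x - ⟪x, e⟫ • e‖ •
    (J (‖x - ⟪x, e⟫ • e‖⁻¹ • (x - ⟪x, e⟫ • e))) z

section InnerProductSpace

variable {V : Type*} [NormedAddCommGroup V] [InnerProductSpace ℝ V]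

theorem real_inner_self_apply_eq_zero {A : V →ₗ[ℝ] V} (hA : ∀ u v, ⟪A u, A v⟫ = ⟪u, v⟫)
    (hA2 : ∀ u, A (A u) = -u) (u : V) : ⟪u, A u⟫ = 0 := by
  have h := hA u (A u)
  rw [hA2, inner_neg_right, real_inner_comm (A u)] at h
  linarith [real_inner_comm u (A u)]

theorem norm_smul_add_smul_apply_sq {A : V →ₗ[ℝ] V} (hA : ∀ u v, ⟪A u, A v⟫ = ⟪u, v⟫)
    (hA2 : ∀ u, A (A u) = -u) (a c : ℝ) (u : V) :
    ‖a • u + c • A u‖ ^ 2 = (a ^ 2 + c ^ 2) * ‖u‖ ^ 2 := by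
  have hAu : ‖A u‖ ^ 2 = ‖u‖ ^ 2 := by
    rw [← real_inner_self_eq_norm_sq, ← real_inner_self_eq_norm_sq, hA]
  rw [norm_add_sq_real, real_inner_smul_left, real_inner_smul_right,
    real_inner_self_apply_eq_zero hA hA2, norm_smul, norm_smul, mul_pow, mul_pow, hAu,
    Real.norm_eq_abs, Real.norm_eq_abs, sq_abs, sq_abs]
  ring

theorem real_inner_sub_inner_smul_self {e : V} (he : ‖e‖ = 1) (x : V) :
    ⟪x - ⟪x, e⟫ • e, e⟫ = 0 := by
  rw [inner_sub_left, real_inner_smul_left, real_inner_self_eq_norm_sq, he]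
  ring

theorem norm_sq_eq_inner_sq_add_norm_sub_sq {e : V} (he : ‖e‖ = 1) (x : V) :
    ‖x‖ ^ 2 = ⟪x, e⟫ ^ 2 + ‖x - ⟪x, e⟫ • e‖ ^ 2 := by
  have horth : ⟪⟪x, e⟫ • e, x - ⟪x, e⟫ • e⟫ = 0 := by
    rw [real_inner_smul_left, real_inner_comm (x - ⟪x, e⟫ • e), real_inner_sub_inner_smul_self he,
      mul_zero]
  have h := norm_add_sq_eq_norm_sq_add_norm_sq_real horth
  rw [add_sub_cancel, norm_smul, he, mul_one, Real.norm_eq_abs] at h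
  nlinarith [sq_abs ⟪x, e⟫]

theorem real_inner_smul_sub_inner_smul_self {e : V} (he : ‖e‖ = 1) (c : ℝ) (x : V) :
    ⟪c • (x - ⟪x, e⟫ • e), e⟫ = 0 := by
  rw [real_inner_smul_left, real_inner_sub_inner_smul_self he, mul_zero]

variable (J : V → V →ₗ[ℝ] V) (e : V)

noncomputable def kirchhoffLinearMap (x : V) : V →ₗ[ℝ] V :=
  ⟪x, e⟫ • LinearMap.id + ‖x - ⟪x, e⟫ • e‖ • J (‖x - ⟪x, e⟫ • e‖⁻¹ • (x - ⟪x, e⟫ • e))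

theorem coe_kirchhoffLinearMap (x : V) : ⇑(kirchhoffLinearMap J e x) = kirchhoffMul J e x := by
  ext z
  unfold kirchhoffMul kirchhoffLinearMap
  split_ifs with h <;> simp [h]

theorem isLinearMap_kirchhoffMul (x : V) : IsLinearMap ℝ (kirchhoffMul J e x) :=
  coe_kirchhoffLinearMap J e x ▸ (kirchhoffLinearMap J e x).isLinear

theorem norm_kirchhoffMul_sq (he : ‖e‖ = 1)
    (horth : ∀ y, ‖y‖ = 1 → ⟪y, e⟫ = 0 → ∀ u v, ⟪J y u, J y v⟫ = ⟪u, v⟫)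
    (hJ2 : ∀ y, ‖y‖ = 1 → ⟪y, e⟫ = 0 → ∀ u, J y (J y u) = -u) (x z : V) :
    ‖kirchhoffMul J e x z‖ ^ 2 = ‖x‖ ^ 2 * ‖z‖ ^ 2 := by
  rw [norm_sq_eq_inner_sq_add_norm_sub_sq he x, kirchhoffMul]
  split_ifs with hb
  · rw [hb, norm_smul, norm_zero, mul_pow, Real.norm_eq_abs, sq_abs]
    ring
  · have hy := norm_smul_inv_norm (𝕜 := ℝ) hb
    have hye := real_inner_smul_sub_inner_smul_self he ‖x - ⟪x, e⟫ • e‖⁻¹ x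
    exact norm_smul_add_smul_apply_sq (horth _ hy hye) (hJ2 _ hy hye) _ _ z

theorem kirchhoffMul_self_left (he : ‖e‖ = 1) (z : V) : kirchhoffMul J e e z = z := by
  have hee : ⟪e, e⟫ = 1 := by rw [real_inner_self_eq_norm_sq, he, one_pow]
  rw [kirchhoffMul, dif_pos (by rw [hee, one_smul, sub_self]), hee, one_smul]

theorem kirchhoffMul_self_right (he : ‖e‖ = 1)
    (hJe : ∀ y, ‖y‖ = 1 → ⟪y, e⟫ = 0 → J y e = y) (x : V) : kirchhoffMul J e x e = x := by
  rw [kirchhoffMul]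
  split_ifs with hb
  · exact (sub_eq_zero.mp hb).symm
  · have hy : ‖‖x - ⟪x, e⟫ • e‖⁻¹ • (x - ⟪x, e⟫ • e)‖ = 1 := norm_smul_inv_norm hb
    rw [hJe _ hy (real_inner_smul_sub_inner_smul_self he _ x), smul_smul,
      mul_inv_cancel₀ (norm_ne_zero_iff.mpr hb), one_smul, add_sub_cancel]

theorem kirchhoffMul_injective (he : ‖e‖ = 1)
    (horth : ∀ y, ‖y‖ = 1 → ⟪y, e⟫ = 0 → ∀ u v, ⟪J y u, J y v⟫ = ⟪u, v⟫)
    (hJ2 : ∀ y, ‖y‖ = 1 → ⟪y, e⟫ = 0 → ∀ u, J y (J y u) = -u) {x : V} (hx : x ≠ 0) :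
    Function.Injective (kirchhoffMul J e x) := by
  rw [← coe_kirchhoffLinearMap, injective_iff_map_eq_zero]
  intro z hz
  have h := norm_kirchhoffMul_sq J e he horth hJ2 x z
  rw [← coe_kirchhoffLinearMap, hz, norm_zero] at h
  simpa [hx] using h

theorem kirchhoffMul_bijective [FiniteDimensional ℝ V] (he : ‖e‖ = 1)
    (horth : ∀ y, ‖y‖ = 1 → ⟪y, e⟫ = 0 → ∀ u v, ⟪J y u, J y v⟫ = ⟪u, v⟫)
    (hJ2 : ∀ y, ‖y‖ = 1 → ⟪y, e⟫ = 0 → ∀ u, J y (J y u) = -u) {x : V} (hx : x ≠ 0) :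
    Function.Bijective (kirchhoffMul J e x) := by
  have hinj := kirchhoffMul_injective J e he horth hJ2 hx
  rw [← coe_kirchhoffLinearMap] at hinj ⊢
  exact ⟨hinj, LinearMap.injective_iff_surjective.mp hinj⟩

end InnerProductSpace

theorem kirchhoff_stmt15_general
    (e : EuclideanSpace ℝ (Fin 8)) (he : ‖e‖ = 1)
    (J : EuclideanSpace ℝ (Fin 8) → EuclideanSpace ℝ (Fin 8) →ₗ[ℝ] EuclideanSpace ℝ (Fin 8))
    (horth : ∀ y, ‖y‖ = 1 → ⟪y, e⟫ = 0 → ∀ u v, ⟪J y u, J y v⟫ = ⟪u, v⟫)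
    (hJ2 : ∀ y, ‖y‖ = 1 → ⟪y, e⟫ = 0 → ∀ u, J y (J y u) = -u)
    (hJe : ∀ y, ‖y‖ = 1 → ⟪y, e⟫ = 0 → J y e = y) :
    (∀ x z, ‖kirchhoffMul J e x z‖ ^ 2 = ‖x‖ ^ 2 * ‖z‖ ^ 2)
      ∧ (∀ z, kirchhoffMul J e e z = z)
      ∧ (∀ z, kirchhoffMul J e z e = z)
      ∧ (∀ x, x ≠ 0 →
          IsLinearMap ℝ (kirchhoffMul J e x) ∧ Function.Bijective (kirchhoffMul J e x)) :=
  ⟨norm_kirchhoffMul_sq J e he horth hJ2, kirchhoffMul_self_left J e he,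
    kirchhoffMul_self_right J e he hJe,
    fun _ hx => ⟨isLinearMap_kirchhoffMul J e _, kirchhoffMul_bijective J e he horth hJ2 hx⟩⟩

/-- the multiplication `m̂(x,y) = σ̃_x(y)` on `ℝ⁸` built from an almost
hermitian structure on `S⁶` via Kirchhoff's construction satisfies the norm product rule
`‖m̂(x,y)‖² = ‖x‖²·‖y‖²`, has `e` as a two-sided identity, and `m̂(x,·)` is a linear
isomorphism for each `x ≠ 0`. -/
theorem kirchhoff_stmt15
    (e : EuclideanSpace ℝ (Fin 8)) (he : ‖e‖ = 1)
    (J : EuclideanSpace ℝ (Fin 8) → EuclideanSpace ℝ (Fin 8) →ₗ[ℝ] EuclideanSpace ℝ (Fin 8))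
    (horth : ∀ y, ‖y‖ = 1 → ⟪y, e⟫ = 0 → ∀ u v, ⟪J y u, J y v⟫ = ⟪u, v⟫)
    (hJ2 : ∀ y, ‖y‖ = 1 → ⟪y, e⟫ = 0 → ∀ u, J y (J y u) = -u)
    (hJe : ∀ y, ‖y‖ = 1 → ⟪y, e⟫ = 0 → J y e = y)
    (hJy : ∀ y, ‖y‖ = 1 → ⟪y, e⟫ = 0 → J y y = -e) :
    (∀ x z, ‖kirchhoffMul J e x z‖ ^ 2 = ‖x‖ ^ 2 * ‖z‖ ^ 2)
      ∧ (∀ z, kirchhoffMul J e e z = z)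
      ∧ (∀ z, kirchhoffMul J e z e = z)
      ∧ (∀ x, x ≠ 0 →
          IsLinearMap ℝ (kirchhoffMul J e x) ∧ Function.Bijective (kirchhoffMul J e x)) :=
  kirchhoff_stmt15_general e he J horth hJ2 hJe
end
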